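/- arXiv:0803.2204 — 3 statements merged into one kernel-verified Lean document; each statement's English description precedes it below -/
import Mathlib

section
/- For every g ≥ 0 and n ≥ 2 (with the convention F_{−1} := 0), the n-point functions satisfy, as an identity of rational functions in x_1,…,x_n over ℚ: (2g+n−1) F_g(x_1,…,x_n) = ((Σ_{j=1}^n x_j)^3/12) F_{g−1}(x_1,…,x_n) + (1/(2 Σ_{j=1}^n x_j)) Σ_{g'=0}^{g} Σ_{{1,…,n}=I⊔J, I,J≠∅} (Σ_{i∈I} x_i)^2 (Σ_{i∈J} x_i)^2 F_{g'}(x_I) F_{g−g'}(x_J), where the inner sum runs over ordered pairs of disjoint nonempty sets I, J with I ∪ J = {1,…,n}. -/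
open MvPolynomial Finset

noncomputable section

/-- The polynomial ring `ℚ[x_1,…,x_n]`. -/
abbrev R (n : ℕ) : Type := MvPolynomial (Fin n) ℚ

/-- The field of rational functions `ℚ(x_1,…,x_n)`. -/
abbrev K (n : ℕ) : Type := FractionRing (R n)

/-- `x_1 + ⋯ + x_n` as an element of `K n`. -/
def SX (n : ℕ) : K n := algebraMap (R n) (K n) (∑ j, X j)

/-- `x_1^3 + ⋯ + x_n^3` as an element of `K n`. -/
def SX3 (n : ℕ) : K n := algebraMap (R n) (K n) (∑ j, (X j)^3)

/-- `Δ(x_1,…,x_n) = ((Σ x_j)^3 − Σ x_j^3)/3`. -/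
def Dlt (n : ℕ) : K n := ((SX n)^3 - SX3 n) / 3

/-- The ring homomorphism `ℚ[x_1,…,x_{|I|}] → ℚ(x_1,…,x_n)` substituting the variables
of the subset `I` (in increasing order). -/
def embRH {n : ℕ} (I : Finset (Fin n)) : R I.card →+* K n :=
  (algebraMap (R n) (K n)).comp
    (MvPolynomial.rename (fun i : Fin I.card => ((I.orderIsoOfFin rfl) i : Fin n))).toRingHom

lemma embRH_inj {n : ℕ} (I : Finset (Fin n)) : Function.Injective (embRH I) := by
  have h1 : Function.Injective (fun i : Fin I.card => ((I.orderIsoOfFin rfl) i : Fin n)) := by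
    intro i j hij
    exact (I.orderIsoOfFin rfl).injective (Subtype.val_injective hij)
  have h2 := (IsFractionRing.injective (R n) (K n)).comp (MvPolynomial.rename_injective _ h1)
  simpa [embRH, RingHom.coe_comp] using h2

/-- The field embedding `ℚ(x_1,…,x_{|I|}) → ℚ(x_1,…,x_n)` substituting the variables
of the subset `I` (in increasing order).  Used for expressions like `G_{r'}(x_I)`. -/
def emb {n : ℕ} (I : Finset (Fin n)) : K I.card →+* K n :=
  IsFractionRing.lift (embRH_inj I)

/-- The normalized `n`-point functions `G_g(x_1,…,x_n)`, defined with a fuel parameter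
(first argument) for structural recursion; for `fuel ≥ n` this computes the recursively
defined normalized `n`-point function:  `G_0(x) = x^{-2}`, `G_g(x) = 0` for `g ≥ 1`, and
for `n ≥ 2`,
`G_g = Σ_{r+s=g} ((2r+n−3)!!/(4^s(2r+2s+n−1)!!)) P_r Δ^s` where
`P_r = (1/(2Σx_j)) Σ_{I⊔J={1..n}, I,J≠∅} (Σ_I x)²(Σ_J x)² Σ_{r'≤r} G_{r'}(x_I)G_{r−r'}(x_J)`. -/
def Gf : (fuel : ℕ) → (n : ℕ) → ℕ → K n
  | _, 0, _ => 0
  | _, 1, 0 => (algebraMap (R 1) (K 1) (X 0)) ^ (-2 : ℤ)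
  | _, 1, _+1 => 0
  | 0, _+2, _ => 0
  | fuel+1, n+2, g =>
      ∑ s ∈ Finset.range (g+1),
        (((Nat.doubleFactorial (2*(g-s)+(n+2)-3) : ℚ) /
          (4^s * (Nat.doubleFactorial (2*g+(n+2)-1) : ℚ))) : K (n+2)) *
        ((2 * SX (n+2))⁻¹ *
          ∑ I : Finset (Fin (n+2)),
            if I ≠ ∅ ∧ I ≠ univ then
              (algebraMap (R (n+2)) (K (n+2)) (∑ i ∈ I, X i))^2 *
              (algebraMap (R (n+2)) (K (n+2)) (∑ i ∈ Iᶜ, X i))^2 *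
              ∑ r' ∈ Finset.range ((g-s)+1),
                emb I (Gf fuel I.card r') * emb Iᶜ (Gf fuel Iᶜ.card ((g-s) - r'))
            else 0) *
        (Dlt (n+2))^s

/-- The normalized `n`-point function `G_g(x_1,…,x_n)` as an element of `ℚ(x_1,…,x_n)`. -/
def Gnpt (n g : ℕ) : K n := Gf n n g

/-- `P_r(x_1,…,x_n)`. -/
def Ppoly (n r : ℕ) : K n :=
  (2 * SX n)⁻¹ *
    ∑ I : Finset (Fin n),
      if I ≠ ∅ ∧ I ≠ univ then
        (algebraMap (R n) (K n) (∑ i ∈ I, X i))^2 *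
        (algebraMap (R n) (K n) (∑ i ∈ Iᶜ, X i))^2 *
        ∑ r' ∈ Finset.range (r+1), emb I (Gnpt I.card r') * emb Iᶜ (Gnpt Iᶜ.card (r - r'))
      else 0

/-- The `n`-point function `F_g(x_1,…,x_n) = Σ_{h+d=g} (1/d!)((Σx_j^3)/24)^d G_h(x_1,…,x_n)`. -/
def Fnpt (n g : ℕ) : K n :=
  ∑ d ∈ Finset.range (g+1),
    ((1 / (Nat.factorial d : ℚ)) : K n) * (SX3 n / 24)^d * Gnpt n (g-d)

open Classical in
/-- The coefficient of the monomial `Π x_j^{d_j}` of an element of `ℚ(x_1,…,x_n)` which is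
a polynomial (junk value `0` otherwise). -/
def coeffK {n : ℕ} (f : K n) (d : Fin n → ℕ) : ℚ :=
  if h : ∃ p : R n, algebraMap (R n) (K n) p = f then
    MvPolynomial.coeff (Finsupp.equivFunOnFinite.symm d) h.choose
  else 0

/-- The intersection index `⟨τ_{d_1} ⋯ τ_{d_n}⟩_g`, i.e. the coefficient of `Π x_j^{d_j}`
in `F_g(x_1,…,x_n)`.  For `(g,n) = (0,1), (0,2)` and nonnegative `d_j` the value is `0`
(the conventional values `⟨τ_{-2}⟩_0 = 1`, `⟨τ_k τ_{-1-k}⟩_0 = (-1)^k` have a negative index). -/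
def bracket (g : ℕ) {n : ℕ} (d : Fin n → ℕ) : ℚ :=
  if g = 0 ∧ n ≤ 2 then 0 else coeffK (Fnpt n g) d

/-- `⟨τ_j Π_{i ∈ I} τ_{d_i}⟩_g` for a subset `I ⊆ {1,…,n}`. -/
def bracketI (g : ℕ) {n : ℕ} (j : ℕ) (I : Finset (Fin n)) (d : Fin n → ℕ) : ℚ :=
  bracket g (Fin.cons j (fun i : Fin I.card => d ((I.orderIsoOfFin rfl) i)))


/-! ### Laurent expansions in `y` (formal series in `ℚ[x_1,…,x_n][[y,y⁻¹]]` of bounded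
`y`-degree, realized as Hahn/Laurent series in the variable `t = y⁻¹`, so that the
coefficient of `y^k` is the Hahn coefficient at `-k`). -/

/-- Laurent series in `t = y⁻¹` with coefficients in `ℚ[x_1,…,x_n]`. -/
abbrev Lau (n : ℕ) : Type := LaurentSeries (R n)

/-- The generalized binomial coefficient `C(p,k) = p(p−1)⋯(p−k+1)/k!` for `p : ℤ`, `k : ℕ`. -/
def binomZ (p : ℤ) (k : ℕ) : ℚ := (∏ i ∈ Finset.range k, ((p : ℚ) - i)) / (Nat.factorial k)

/-- The expansion of `(y + c)^m = Σ_{k≥0} C(m,k) c^k y^{m−k}` as a Laurent series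
in `t = y⁻¹` (for `m ≥ 0` this is the usual binomial expansion of the polynomial). -/
def yExpAdd {n : ℕ} (c : R n) (m : ℤ) : Lau n :=
  (HahnSeries.single (-m) (1 : R n)) *
    HahnSeries.ofPowerSeries ℤ (R n)
      (PowerSeries.mk fun k => MvPolynomial.C (binomZ m k) * c^k)

/-- The expansion of `(±y + c)^m`, where the sign is `+` if `σ = true` and `−` otherwise;
it is computed as `(±1)^m (y ± c)^m`. -/
def LExp {n : ℕ} (σ : Bool) (c : R n) (m : ℤ) : Lau n :=
  (if σ then 1 else if Even m then 1 else -1 : Lau n) *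
    yExpAdd ((if σ then 1 else -1 : R n) * c) m

open Classical in
/-- The polynomial representing an element of `ℚ(x_1,…,x_n)` lying in `ℚ[x_1,…,x_n]`
(junk value `0` otherwise). -/
def polyOf {n : ℕ} (f : K n) : R n :=
  if h : ∃ p : R n, algebraMap (R n) (K n) p = f then h.choose else 0

/-- `±y` as a Laurent series in `t = y⁻¹`. -/
def yLau (n : ℕ) (σ : Bool) : Lau n :=
  (if σ then 1 else -1 : Lau n) * HahnSeries.single (-1 : ℤ) (1 : R n)

/-- The expansion of `F_g(±y, x_I)` as a Laurent series in `t = y⁻¹` with coefficients in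
`ℚ[x_1,…,x_n]`: for `(g,|I|+1) = (0,1)` it is `(±y)^{-2} = y^{-2}`, for `(g,|I|+1) = (0,2)`
it is `1/(±y + x_i) = Σ_{k≥0} (−1)^k x_i^k (±y)^{−k−1}`, and otherwise it is obtained by
substituting `±y` and the variables of `I` into the polynomial `F_g`. -/
def FExp {n : ℕ} (σ : Bool) (g : ℕ) (I : Finset (Fin n)) : Lau n :=
  if g = 0 ∧ I.card = 0 then HahnSeries.single (2 : ℤ) (1 : R n)
  else if g = 0 ∧ I.card = 1 then LExp σ (∑ i ∈ I, X i) (-1)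
  else
    MvPolynomial.eval₂ ((HahnSeries.C).comp (algebraMap ℚ (R n)))
      (Fin.cons (yLau n σ)
        (fun i : Fin I.card => HahnSeries.C (X ((I.orderIsoOfFin rfl) i : Fin n))))
      (polyOf (Fnpt (I.card + 1) g))

/-- `L_g^{a,b}(y, x_1,…,x_n) = Σ_{g'=0}^{g} Σ_{I⊔J={1,…,n}} (y+Σ_I x)^a (−y+Σ_J x)^b
F_{g'}(y,x_I) F_{g−g'}(−y,x_J)` as a Laurent series in `t = y⁻¹`. -/
def LL (g n : ℕ) (a b : ℤ) : Lau n :=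
  ∑ gp ∈ Finset.range (g+1), ∑ I : Finset (Fin n),
    LExp true (∑ i ∈ I, X i) a * LExp false (∑ i ∈ Iᶜ, X i) b *
      FExp true gp I * FExp false (g - gp) Iᶜ

/-- The coefficient of `y^k Π_j x_j^{d_j}` in a Laurent series in `t = y⁻¹` with coefficients
in `ℚ[x_1,…,x_n]`. -/
def coeffL {n : ℕ} (f : Lau n) (k : ℤ) (d : Fin n → ℕ) : ℚ :=
  MvPolynomial.coeff (Finsupp.equivFunOnFinite.symm d) (f.coeff (-k))

/-- The index of the variable `z_i` among the `a + b + n` variables `z, w, x`. -/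
def zIdx (a b n : ℕ) (i : Fin a) : Fin (a+b+n) := ⟨i.1, by have := i.2; omega⟩

/-- The index of the variable `w_i` among the `a + b + n` variables `z, w, x`. -/
def wIdx (a b n : ℕ) (i : Fin b) : Fin (a+b+n) := ⟨a + i.1, by have := i.2; omega⟩

/-- The index of the variable `x_i` among the `a + b + n` variables `z, w, x`. -/
def xIdx (a b n : ℕ) (i : Fin n) : Fin (a+b+n) := ⟨a + b + i.1, by have := i.2; omega⟩

/-- `L_g(y; z_1,…,z_a; w_1,…,w_b; x_1,…,x_n)
 = Σ_{g'=0}^{g} Σ_{I⊔J={1,…,n}} F_{g'}(y, z, x_I) F_{g−g'}(−y, w, x_J)`,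
as a Laurent series in `t = y⁻¹` with coefficients in `ℚ[z,w,x]`. -/
def LLm (g n a b : ℕ) : Lau (a+b+n) :=
  ∑ gp ∈ Finset.range (g+1), ∑ I : Finset (Fin n),
    FExp true gp ((univ.image (zIdx a b n)) ∪ I.image (xIdx a b n)) *
    FExp false (g - gp) ((univ.image (wIdx a b n)) ∪ Iᶜ.image (xIdx a b n))

/-- The exponent vector of the monomial `Π z_j^{r_j} Π w_j^{s_j} Π x_j^{d_j}`. -/
def expVec (a b n : ℕ) (r : Fin a → ℕ) (s : Fin b → ℕ) (d : Fin n → ℕ) :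
    Fin (a+b+n) → ℕ :=
  fun v =>
    if h : v.1 < a then r ⟨v.1, h⟩
    else if h2 : v.1 < a + b then s ⟨v.1 - a, by omega⟩
    else d ⟨v.1 - (a+b), by have := v.2; omega⟩


/-! Collect the genus expansions into power series in an auxiliary variable `t`:
`𝔾 = Σ G_g t^g`, `𝔽 = Σ F_g t^g = e^{t Σx³/24} 𝔾` and `𝔓 = Σ P_g t^g`. The closed
formula for `G_g` gives `(2g+n−1) G_g = (Δ/4) G_{g−1} + P_g`, that is
`(2t d/dt + n − 1) 𝔾 = (Δ/4) t 𝔾 + 𝔓`. Passing the operator through the exponential adds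
`(Σx³/12) t 𝔽`, and `Δ/4 + Σx³/12 = (Σx)³/12`. On the quadratic side,
`e^{tA} e^{tB} = e^{t(A+B)}` with `A + B = Σx³` turns `Σ F(x_I) F(x_J)` into
`e^{t Σx³/24}` times `Σ G(x_I) G(x_J) = 2(Σx) 𝔓`. -/

namespace PowerSeries

variable {A : Type*} [CommRing A]

theorem coeff_mul_eq_sum_range (φ ψ : A⟦X⟧) (n : ℕ) :
    coeff n (φ * ψ) = ∑ k ∈ range (n + 1), coeff k φ * coeff (n - k) ψ := by
  rw [coeff_mul, Nat.sum_antidiagonal_eq_sum_range_succ_mk]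

theorem coeff_C_mul_X_mul (a : A) (φ : A⟦X⟧) (n : ℕ) :
    coeff n (C a * X * φ) = a * if n = 0 then 0 else coeff (n - 1) φ := by
  cases n <;> simp [mul_assoc, coeff_succ_X_mul]

theorem derivative_rescale (a : A) (φ : A⟦X⟧) :
    d⁄dX A (rescale a φ) = C a * rescale a (d⁄dX A φ) := by
  ext n
  simp only [coeff_derivative, coeff_rescale, coeff_C_mul, pow_succ]
  ring

def eulerOp (c : A) (φ : A⟦X⟧) : A⟦X⟧ := 2 • (X * d⁄dX A φ) + C c * φ

theorem coeff_eulerOp (c : A) (φ : A⟦X⟧) (n : ℕ) :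
    coeff n (eulerOp c φ) = (2 * n + c) * coeff n φ := by
  rw [eulerOp, map_add, map_nsmul, coeff_C_mul, nsmul_eq_mul]
  cases n <;> simp only [coeff_zero_X_mul, coeff_succ_X_mul, coeff_derivative] <;> push_cast <;>
    ring

theorem eulerOp_rescale_exp_mul [Algebra ℚ A] (a c : A) (φ : A⟦X⟧) :
    eulerOp c (rescale a (exp A) * φ)
      = rescale a (exp A) * (eulerOp c φ + C (2 * a) * X * φ) := by
  simp only [eulerOp, Derivation.leibniz, derivative_rescale, derivative_exp, smul_eq_mul, map_mul,
    map_ofNat]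
  ring

theorem map_rescale_exp [Algebra ℚ A] {B : Type*} [CommRing B] [Algebra ℚ B] (f : A →+* B)
    (a : A) : map f (rescale a (exp A)) = rescale (f a) (exp B) := by
  rw [← rescale_map, map_exp]

end PowerSeries

open PowerSeries (rescale exp eulerOp)

def gCoeff (n h s : ℕ) : ℚ :=
  (Nat.doubleFactorial (2*(h-s)+n-3) : ℚ) / (4^s * (Nat.doubleFactorial (2*h+n-1) : ℚ))

lemma Gf_succ_eq_sum (f m g : ℕ) (hf : ∀ k < m + 2, ∀ r, Gf f k r = Gnpt k r) :
    Gf (f+1) (m+2) g = ∑ s ∈ range (g+1),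
      (gCoeff (m+2) g s : K (m+2)) * Ppoly (m+2) (g-s) * Dlt (m+2) ^ s := by
  have hcard : ∀ {J : Finset (Fin (m+2))}, J ≠ univ → J.card < m + 2 := fun hJ => by
    simpa using (card_lt_iff_ne_univ _).2 hJ
  simp only [Gf, Ppoly, gCoeff]
  push_cast
  refine sum_congr rfl fun s _ => ?_
  congr 3
  refine sum_congr rfl fun I _ => ?_
  split_ifs with hI
  · have hIc : Iᶜ ≠ univ := by simpa [compl_eq_univ_iff] using hI.1
    simp only [hf _ (hcard hI.2), hf _ (hcard hIc)]
  · rfl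

lemma Gf_eq_Gnpt {fuel n : ℕ} (h : n ≤ fuel) (g : ℕ) : Gf fuel n g = Gnpt n g := by
  induction n using Nat.strong_induction_on generalizing fuel g with
  | _ n ih =>
    match n, fuel, h with
    | 0, fuel, _ => cases fuel <;> rfl
    | 1, fuel, _ => cases fuel <;> cases g <;> rfl
    | m+2, f+1, h =>
      rw [Gnpt, Gf_succ_eq_sum f m g fun k hk => ih k hk (by omega),
        Gf_succ_eq_sum (m+1) m g fun k hk => ih k hk (by omega)]

lemma Gnpt_eq_sum (m g : ℕ) :
    Gnpt (m+2) g = ∑ s ∈ range (g+1),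
      (gCoeff (m+2) g s : K (m+2)) * Ppoly (m+2) (g-s) * Dlt (m+2) ^ s :=
  Gf_succ_eq_sum (m+1) m g fun k hk => Gf_eq_Gnpt (by omega)

lemma gCoeff_zero (m h : ℕ) : (2 * h + m + 1 : ℚ) * gCoeff (m+2) h 0 = 1 := by
  have hstep : Nat.doubleFactorial (2*h+(m+2)-1)
      = (2*h+m+1) * Nat.doubleFactorial (2*h+(m+2)-3) := by
    rcases Nat.eq_zero_or_pos (2*h+m) with hz | hp
    · obtain ⟨rfl, rfl⟩ : h = 0 ∧ m = 0 := by omega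
      rfl
    · rw [show 2*h+(m+2)-1 = (2*h+(m+2)-3) + 2 by omega, Nat.doubleFactorial_add_two]
      congr 1
      omega
  have := (Nat.doubleFactorial_pos (2*h+(m+2)-3)).ne'
  simp only [gCoeff, Nat.sub_zero, pow_zero, one_mul, hstep]
  push_cast
  field_simp

lemma gCoeff_succ (m h s : ℕ) :
    (2 * (h+1) + m + 1 : ℚ) * gCoeff (m+2) (h+1) (s+1) = gCoeff (m+2) h s / 4 := by
  have := (Nat.doubleFactorial_pos (2*h+(m+2)-1)).ne'
  rw [gCoeff, gCoeff, show h+1-(s+1) = h-s by omega,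
    show 2*(h+1)+(m+2)-1 = (2*h+(m+2)-1)+2 by omega, Nat.doubleFactorial_add_two,
    show 2*h+(m+2)-1 = 2*h+m+1 by omega]
  push_cast
  field_simp
  ring

lemma Gnpt_zero_recursion (m : ℕ) : (m + 1 : K (m+2)) * Gnpt (m+2) 0 = Ppoly (m+2) 0 := by
  have h := congrArg (fun q : ℚ => (q : K (m+2))) (gCoeff_zero m 0)
  push_cast at h
  rw [Gnpt_eq_sum, sum_range_one, pow_zero, mul_one]
  linear_combination Ppoly (m+2) 0 * h

lemma Gnpt_succ_recursion (m h : ℕ) :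
    (2 * (h+1) + m + 1 : K (m+2)) * Gnpt (m+2) (h+1)
      = Dlt (m+2) / 4 * Gnpt (m+2) h + Ppoly (m+2) (h+1) := by
  have h0 := congrArg (fun q : ℚ => (q : K (m+2))) (gCoeff_zero m (h+1))
  have hs := fun s => congrArg (fun q : ℚ => (q : K (m+2))) (gCoeff_succ m h s)
  push_cast at h0 hs
  rw [Gnpt_eq_sum, Gnpt_eq_sum, sum_range_succ', mul_add, mul_sum, mul_sum]
  congr 1
  · refine sum_congr rfl fun s _ => ?_
    rw [show h+1-(s+1) = h-s by omega]
    linear_combination Ppoly (m+2) (h-s) * Dlt (m+2) ^ (s+1) * hs s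
  · rw [pow_zero, mul_one]
    linear_combination Ppoly (m+2) (h+1) * h0

lemma eulerOp_mk_Gnpt (m : ℕ) :
    eulerOp (m + 1 : K (m+2)) (PowerSeries.mk (Gnpt (m+2)))
      = PowerSeries.C (Dlt (m+2) / 4) * PowerSeries.X * PowerSeries.mk (Gnpt (m+2))
        + PowerSeries.mk (Ppoly (m+2)) := by
  ext k
  rw [PowerSeries.coeff_eulerOp, map_add, PowerSeries.coeff_C_mul_X_mul]
  simp only [PowerSeries.coeff_mk]
  cases k with
  | zero => simpa using Gnpt_zero_recursion m
  | succ h =>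
    rw [if_neg h.succ_ne_zero, Nat.add_sub_cancel, ← Gnpt_succ_recursion]
    push_cast
    ring

lemma mk_Fnpt (n : ℕ) :
    PowerSeries.mk (Fnpt n)
      = rescale (SX3 n / 24) (exp (K n)) * PowerSeries.mk (Gnpt n) := by
  ext g
  rw [PowerSeries.coeff_mul_eq_sum_range, PowerSeries.coeff_mk, Fnpt]
  refine sum_congr rfl fun d _ => ?_
  rw [PowerSeries.coeff_rescale, PowerSeries.coeff_exp, PowerSeries.coeff_mk, eq_ratCast]
  push_cast
  ring

lemma emb_SX3 {n : ℕ} (I : Finset (Fin n)) :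
    emb I (SX3 I.card) = algebraMap (R n) (K n) (∑ i ∈ I, X i ^ 3) := by
  rw [SX3, emb, IsFractionRing.lift_algebraMap, embRH, RingHom.comp_apply]
  congr 1
  simp only [AlgHom.toRingHom_eq_coe, RingHom.coe_coe, map_sum, map_pow, rename_X]
  rw [← sum_coe_sort I]
  exact Equiv.sum_comp (I.orderIsoOfFin rfl).toEquiv (fun i => (X (i : Fin n) : R n) ^ 3)

def splitWeight {n : ℕ} (I : Finset (Fin n)) : K n :=
  if I ≠ ∅ ∧ I ≠ univ then
    (algebraMap (R n) (K n) (∑ i ∈ I, X i))^2 * (algebraMap (R n) (K n) (∑ i ∈ Iᶜ, X i))^2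
  else 0

def splitSum (n : ℕ) (u : (k : ℕ) → ℕ → K k) : PowerSeries (K n) :=
  ∑ I : Finset (Fin n), PowerSeries.C (splitWeight I) *
    (PowerSeries.map (emb I) (PowerSeries.mk (u I.card))
      * PowerSeries.map (emb Iᶜ) (PowerSeries.mk (u Iᶜ.card)))

lemma coeff_splitSum (n : ℕ) (u : (k : ℕ) → ℕ → K k) (g : ℕ) :
    PowerSeries.coeff g (splitSum n u) = ∑ I : Finset (Fin n),
      if I ≠ ∅ ∧ I ≠ univ then
        (algebraMap (R n) (K n) (∑ i ∈ I, X i))^2 *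
        (algebraMap (R n) (K n) (∑ i ∈ Iᶜ, X i))^2 *
          ∑ r ∈ range (g+1), emb I (u I.card r) * emb Iᶜ (u Iᶜ.card (g - r))
      else 0 := by
  rw [splitSum, map_sum]
  refine sum_congr rfl fun I _ => ?_
  rw [PowerSeries.coeff_C_mul, PowerSeries.coeff_mul_eq_sum_range, splitWeight, ite_mul, zero_mul]
  simp only [PowerSeries.coeff_map, PowerSeries.coeff_mk]

lemma mk_Ppoly (n : ℕ) :
    PowerSeries.mk (Ppoly n) = PowerSeries.C (2 * SX n)⁻¹ * splitSum n Gnpt := by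
  ext r
  rw [PowerSeries.coeff_C_mul, coeff_splitSum, PowerSeries.coeff_mk, Ppoly]

lemma splitSum_Fnpt (n : ℕ) :
    splitSum n Fnpt = rescale (SX3 n / 24) (exp (K n)) * splitSum n Gnpt := by
  have hmap : ∀ I : Finset (Fin n), PowerSeries.map (emb I) (PowerSeries.mk (Fnpt I.card))
      = rescale (algebraMap (R n) (K n) (∑ i ∈ I, X i ^ 3) / 24) (exp (K n))
        * PowerSeries.map (emb I) (PowerSeries.mk (Gnpt I.card)) := fun I => by
    rw [mk_Fnpt, map_mul, PowerSeries.map_rescale_exp, map_div₀, emb_SX3, map_ofNat]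
  rw [splitSum, splitSum, mul_sum]
  refine sum_congr rfl fun I _ => ?_
  have hsum : algebraMap (R n) (K n) (∑ i ∈ I, X i ^ 3) / 24
      + algebraMap (R n) (K n) (∑ i ∈ Iᶜ, X i ^ 3) / 24 = SX3 n / 24 := by
    rw [← add_div, ← map_add, sum_add_sum_compl, SX3]
  rw [hmap, hmap, ← hsum, ← PowerSeries.exp_mul_exp_eq_exp_add]
  ring

lemma coeff_splitSum_Fnpt (n g : ℕ) :
    PowerSeries.coeff g (splitSum n Fnpt) = ∑ gp ∈ range (g+1), ∑ I : Finset (Fin n),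
      (if I ≠ ∅ ∧ I ≠ univ then
        (algebraMap (R n) (K n) (∑ i ∈ I, X i))^2 *
        (algebraMap (R n) (K n) (∑ i ∈ Iᶜ, X i))^2 *
        (emb I (Fnpt I.card gp) * emb Iᶜ (Fnpt Iᶜ.card (g - gp)))
       else 0) := by
  rw [coeff_splitSum, sum_comm]
  refine sum_congr rfl fun I _ => ?_
  split_ifs
  · rw [mul_sum]
  · rw [sum_const_zero]

/-- The recursion formula for the `n`-point functions (`n ≥ 2`, with `F_{−1} := 0`):
`(2g+n−1) F_g(x) = ((Σx_j)³/12) F_{g−1}(x)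
 + (1/(2Σx_j)) Σ_{g'} Σ_{I⊔J, I,J≠∅} (Σ_I x)²(Σ_J x)² F_{g'}(x_I) F_{g−g'}(x_J)`. -/
theorem npoint_recursion (g n : ℕ) (hn : 2 ≤ n) :
    ((2*g+n-1 : ℕ) : K n) * Fnpt n g
      = (SX n)^3 / 12 * (if g = 0 then 0 else Fnpt n (g-1))
        + (2 * SX n)⁻¹ *
            ∑ gp ∈ Finset.range (g+1), ∑ I : Finset (Fin n),
              (if I ≠ ∅ ∧ I ≠ univ then
                (algebraMap (R n) (K n) (∑ i ∈ I, X i))^2 *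
                (algebraMap (R n) (K n) (∑ i ∈ Iᶜ, X i))^2 *
                (emb I (Fnpt I.card gp) * emb Iᶜ (Fnpt Iᶜ.card (g - gp)))
               else 0) := by
  obtain ⟨m, rfl⟩ : ∃ m, n = m + 2 := ⟨n - 2, by omega⟩
  have hcube : Dlt (m+2) / 4 + 2 * (SX3 (m+2) / 24) = SX (m+2) ^ 3 / 12 := by
    rw [Dlt]
    ring
  calc ((2*g+(m+2)-1 : ℕ) : K (m+2)) * Fnpt (m+2) g
      = PowerSeries.coeff g (eulerOp (m + 1 : K (m+2)) (PowerSeries.mk (Fnpt (m+2)))) := by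
        rw [PowerSeries.coeff_eulerOp, PowerSeries.coeff_mk, show 2*g+(m+2)-1 = 2*g+m+1 by omega]
        push_cast
        ring
    _ = PowerSeries.coeff g
          (PowerSeries.C (SX (m+2) ^ 3 / 12) * PowerSeries.X * PowerSeries.mk (Fnpt (m+2))
          + PowerSeries.C (2 * SX (m+2))⁻¹ * splitSum (m+2) Fnpt) := by
        rw [mk_Fnpt, PowerSeries.eulerOp_rescale_exp_mul, eulerOp_mk_Gnpt, mk_Ppoly, splitSum_Fnpt,
          ← hcube, map_add PowerSeries.C]
        congr 1
        ring
    _ = _ := by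
        rw [map_add, PowerSeries.coeff_C_mul_X_mul, PowerSeries.coeff_C_mul, coeff_splitSum_Fnpt,
          PowerSeries.coeff_mk]

end
end

section
/- Let g ≥ 0 and a, b ∈ ℤ. For every integer k ≥ 2g−3+a+b, [L_g^{a,b}(y,x)]_{y^k} = 0; that is, in the one-variable case n = 1, the coefficient of y^k x^d in L_g^{a,b}(y,x) vanishes for every integer d ≥ 0. -/
open MvPolynomial Finset

noncomputable section

/-!
For `n = 1` only the splittings `I = ∅` and `I = {1}` occur. Introduce a genus variable `ħ`.
Then `Σ_h F_h(x_1) ħ^h = exp(ħ x_1³/24) x_1^{-2}` and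
`Σ_h F_h(x_1,x_2) ħ^h = exp(ħ (x_1³+x_2³)/24) Σ_h γ_h (x_1x_2(x_1+x_2))^h ħ^h / (x_1+x_2)`
with `γ_h = 1/(4^h (2h+1)!!)`. The genus sum in `L_g^{a,b}` is a product of such series. Their
exponential factors combine to `exp(ħ x³/24)` because `y³ + (-y)³ = 0`, so `L_g^{a,b}(y,x)` is a
sum over `i + h = g` of `x^{3i}/(24^i i!) γ_h` times
`y^{a-2} (x-y)^{b-1} (-yx(x-y))^h + (x+y)^{a-1} (-y)^{b-2} (yx(x+y))^h`.
Both summands have `y`-degree `a+b+2h-3`, and their leading coefficients `(-1)^{b-1} x^h` and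
`(-1)^b x^h` cancel.
-/

open HahnSeries

variable {n : ℕ}

lemma binomZ_zero (p : ℤ) : binomZ p 0 = 1 := by simp [binomZ]

lemma binomZ_zero_succ (k : ℕ) : binomZ 0 (k + 1) = 0 := by
  simp [binomZ, Finset.prod_range_succ']

lemma binomZ_succ_succ (p : ℤ) (k : ℕ) :
    binomZ (p + 1) (k + 1) = binomZ p (k + 1) + binomZ p k := by
  have hprod : ∏ i ∈ Finset.range (k + 1), ((p + 1 : ℤ) - (i : ℚ)) =
      ∏ i ∈ Finset.range (k + 1), ((p : ℚ) - i) +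
        (k + 1) * ∏ i ∈ Finset.range k, ((p : ℚ) - i) := by
    rw [Finset.prod_range_succ', Finset.prod_range_succ]
    push_cast
    simp only [add_sub_add_right_eq_sub]
    ring
  simp only [binomZ, hprod, Nat.factorial_succ, Nat.cast_mul]
  field_simp
  push_cast
  ring

/-- `(1 + c t)^m`. -/
def binomSeries (m : ℤ) (c : R n) : PowerSeries (R n) :=
  PowerSeries.mk fun k => MvPolynomial.C (binomZ m k) * c ^ k

lemma constantCoeff_binomSeries (m : ℤ) (c : R n) :
    PowerSeries.constantCoeff (binomSeries m c) = 1 := by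
  simp [binomSeries, ← PowerSeries.coeff_zero_eq_constantCoeff_apply, binomZ_zero]

lemma binomSeries_zero (c : R n) : binomSeries 0 c = 1 := by
  ext (_ | k) : 1
  · simp [binomSeries, binomZ_zero]
  · simp [binomSeries, binomZ_zero_succ]

lemma binomSeries_add_one (m : ℤ) (c : R n) :
    binomSeries (m + 1) c = binomSeries m c * (1 + PowerSeries.X * PowerSeries.C c) := by
  ext (_ | k) : 1
  · simp [binomSeries, binomZ_zero]
  · rw [mul_add, mul_one, map_add, ← mul_assoc, PowerSeries.coeff_mul_C,
      PowerSeries.coeff_succ_mul_X]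
    simp only [binomSeries, PowerSeries.coeff_mk, binomZ_succ_succ, map_add]
    ring

lemma yExpAdd_add_one (c : R n) (m : ℤ) :
    yExpAdd c m * (single (-1) 1 + HahnSeries.C c) = yExpAdd c (m + 1) := by
  have hshift : single (-(m + 1)) (1 : R n) * single 1 1 = single (-m) 1 := by
    rw [single_mul_single]; ring_nf
  have hstep : single (-m) (1 : R n) * single (-1) 1 = single (-(m + 1)) 1 := by
    rw [single_mul_single]; ring_nf
  change single (-m) 1 * ofPowerSeries ℤ (R n) (binomSeries m c) * _ =
    single (-(m + 1)) 1 * ofPowerSeries ℤ (R n) (binomSeries (m + 1) c)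
  rw [binomSeries_add_one, map_mul, map_add, (ofPowerSeries ℤ (R n)).map_one, map_mul,
    ofPowerSeries_X, ofPowerSeries_C]
  linear_combination (ofPowerSeries ℤ (R n) (binomSeries m c)) * hstep
    - (ofPowerSeries ℤ (R n) (binomSeries m c)) * HahnSeries.C c * hshift

lemma LExp_zero (σ : Bool) (c : R n) : LExp σ c 0 = 1 := by
  have : yExpAdd c 0 = 1 ∧ yExpAdd (-c) 0 = 1 := by
    simp [yExpAdd, ← binomSeries.eq_def, binomSeries_zero]
  cases σ <;> simp [LExp, this]

lemma LExp_add_one (σ : Bool) (c : R n) (m : ℤ) :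
    LExp σ c m * (yLau n σ + HahnSeries.C c) = LExp σ c (m + 1) := by
  cases σ
  · have hy : yLau n false + HahnSeries.C c = -(single (-1) 1 + HahnSeries.C (-c)) := by
      simp [yLau, map_neg]; ring
    simp only [LExp, Bool.false_eq_true, if_false, neg_one_mul, hy, ← yExpAdd_add_one,
      Int.even_add_one]
    split_ifs <;> ring
  · simpa [LExp, yLau] using yExpAdd_add_one c m

def yAddUnit (σ : Bool) (c : R n) : (Lau n)ˣ :=
  Units.mkOfMulEqOne (yLau n σ + HahnSeries.C c) (LExp σ c (-1)) (by
    rw [mul_comm, LExp_add_one, neg_add_cancel, LExp_zero])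

lemma LExp_eq_zpow (σ : Bool) (c : R n) (m : ℤ) :
    LExp σ c m = ((yAddUnit σ c ^ m : (Lau n)ˣ) : Lau n) := by
  induction m using Int.induction_on with
  | zero => rw [LExp_zero, zpow_zero, Units.val_one]
  | succ k ih =>
    rw [← LExp_add_one, ih, zpow_add_one, Units.val_mul]
    rfl
  | pred k ih =>
    have h := LExp_add_one σ c (-k - 1)
    rw [sub_add_cancel] at h
    rw [zpow_sub_one, Units.val_mul, ← ih, ← h, mul_assoc]
    rw [show (yLau n σ + HahnSeries.C c) * ↑(yAddUnit σ c)⁻¹ = 1 from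
      Units.mul_inv _, mul_one]

lemma LExp_add (σ : Bool) (c : R n) (m₁ m₂ : ℤ) :
    LExp σ c m₁ * LExp σ c m₂ = LExp σ c (m₁ + m₂) := by
  simp only [LExp_eq_zpow, zpow_add, Units.val_mul]

lemma LExp_natCast (σ : Bool) (c : R n) (k : ℕ) :
    LExp σ c k = (yLau n σ + HahnSeries.C c) ^ k := by
  rw [LExp_eq_zpow, zpow_natCast, Units.val_pow_eq_pow_val]
  rfl

lemma LExp_one (σ : Bool) (c : R n) : LExp σ c 1 = yLau n σ + HahnSeries.C c := by
  simpa using LExp_natCast σ c 1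

section LeadingTerm

variable {A : Type*} [CommRing A] {f g : LaurentSeries A} {s s' : ℤ} {r r' : A}

/-- `f = t^s (r + O(t))` in `t = y⁻¹`: `f` has `y`-degree at most `-s`, with `r` as the
coefficient of `y^{-s}`. -/
def HasLeadingTerm (f : LaurentSeries A) (s : ℤ) (r : A) : Prop :=
  ∃ P : PowerSeries A, PowerSeries.constantCoeff P = r ∧ f = single s 1 * ofPowerSeries ℤ A P

lemma hasLeadingTerm_C (r : A) : HasLeadingTerm (HahnSeries.C r) 0 r :=
  ⟨PowerSeries.C r, PowerSeries.constantCoeff_C r, by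
    rw [ofPowerSeries_C, single_zero_one, one_mul]⟩

lemma hasLeadingTerm_zero (s : ℤ) : HasLeadingTerm (0 : LaurentSeries A) s 0 :=
  ⟨0, map_zero _, by rw [map_zero, mul_zero]⟩

lemma HasLeadingTerm.add (hf : HasLeadingTerm f s r) (hg : HasLeadingTerm g s r') :
    HasLeadingTerm (f + g) s (r + r') := by
  obtain ⟨P, rfl, rfl⟩ := hf
  obtain ⟨Q, rfl, rfl⟩ := hg
  exact ⟨P + Q, map_add .., by rw [map_add, mul_add]⟩

lemma HasLeadingTerm.mul (hf : HasLeadingTerm f s r) (hg : HasLeadingTerm g s' r') :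
    HasLeadingTerm (f * g) (s + s') (r * r') := by
  obtain ⟨P, rfl, rfl⟩ := hf
  obtain ⟨Q, rfl, rfl⟩ := hg
  refine ⟨P * Q, map_mul .., ?_⟩
  rw [map_mul, ← mul_one (1 : A), ← single_mul_single, mul_one]
  ring

lemma HasLeadingTerm.C_mul (hf : HasLeadingTerm f s r) (p : A) :
    HasLeadingTerm (HahnSeries.C p * f) s (p * r) := by
  simpa using (hasLeadingTerm_C p).mul hf

lemma HasLeadingTerm.pow (hf : HasLeadingTerm f s r) (k : ℕ) :
    HasLeadingTerm (f ^ k) (k * s) (r ^ k) := by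
  induction k with
  | zero => simpa using hasLeadingTerm_C (1 : A)
  | succ k ih => simpa [pow_succ, add_mul] using ih.mul hf

lemma HasLeadingTerm.sum {ι : Type*} (t : Finset ι) {F : ι → LaurentSeries A} {c : ι → A}
    (h : ∀ i ∈ t, HasLeadingTerm (F i) s (c i)) :
    HasLeadingTerm (∑ i ∈ t, F i) s (∑ i ∈ t, c i) := by
  classical
  induction t using Finset.induction_on with
  | empty => simpa using hasLeadingTerm_zero s
  | insert i t hi ih =>
    rw [Finset.sum_insert hi, Finset.sum_insert hi]
    exact (h i (t.mem_insert_self i)).add (ih fun j hj => h j (Finset.mem_insert_of_mem hj))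

lemma HasLeadingTerm.of_le (hf : HasLeadingTerm f s 0) (h : s' ≤ s) : HasLeadingTerm f s' 0 := by
  obtain ⟨P, hP, rfl⟩ := hf
  refine ⟨PowerSeries.X ^ (s - s').toNat * P, by simp [hP], ?_⟩
  rw [map_mul, ofPowerSeries_X_pow, ← mul_assoc, single_mul_single, mul_one,
    Int.toNat_of_nonneg (by omega), add_sub_cancel]

lemma HasLeadingTerm.coeff_self (hf : HasLeadingTerm f s r) : f.coeff s = r := by
  obtain ⟨P, rfl, rfl⟩ := hf
  have h := coeff_single_mul_add (a := 0) (b := s) (r := (1 : A)) (x := ofPowerSeries ℤ A P)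
  rwa [zero_add, one_mul, ← Nat.cast_zero, ofPowerSeries_apply_coeff,
    PowerSeries.coeff_zero_eq_constantCoeff_apply] at h

lemma HasLeadingTerm.coeff_eq_zero (hf : HasLeadingTerm f s 0) {e : ℤ} (he : e ≤ s) :
    f.coeff e = 0 :=
  (hf.of_le he).coeff_self

end LeadingTerm

lemma hasLeadingTerm_LExp (σ : Bool) (c : R n) (m : ℤ) :
    HasLeadingTerm (LExp σ c m) (-m) (if σ then 1 else if Even m then 1 else -1) := by
  have hsign : (if σ then 1 else if Even m then 1 else -1 : Lau n) =
      HahnSeries.C (if σ then 1 else if Even m then 1 else -1) := by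
    split_ifs <;> simp
  have hyExp : HasLeadingTerm (yExpAdd ((if σ then 1 else -1 : R n) * c) m) (-m) 1 :=
    ⟨_, constantCoeff_binomSeries m _, rfl⟩
  have h := (hasLeadingTerm_C (if σ then 1 else if Even m then 1 else -1 : R n)).mul hyExp
  rwa [zero_add, mul_one, ← hsign] at h

section Series

open PowerSeries

variable {B B' : Type*} [CommRing B] [Algebra ℚ B] [CommRing B'] [Algebra ℚ B']

def expDiv24 (s : B) : PowerSeries B :=
  rescale (algebraMap ℚ B (1 / 24) * s) (exp B)

variable (B) in
def gammaSeries : PowerSeries B :=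
  mk fun h => algebraMap ℚ B (1 / (4 ^ h * (2 * h + 1).doubleFactorial))

lemma coeff_expDiv24 (s : B) (d : ℕ) :
    coeff d (expDiv24 s) =
      algebraMap ℚ B (1 / (d.factorial : ℚ)) * (algebraMap ℚ B (1 / 24) * s) ^ d := by
  rw [expDiv24, coeff_rescale, coeff_exp, mul_comm]

lemma expDiv24_mul_expDiv24 (s s' : B) : expDiv24 s * expDiv24 s' = expDiv24 (s + s') := by
  rw [expDiv24, expDiv24, expDiv24, exp_mul_exp_eq_exp_add, mul_add]

lemma rescale_expDiv24 (a s : B) : rescale a (expDiv24 s) = expDiv24 (s * a) := by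
  rw [expDiv24, expDiv24, rescale_rescale, mul_assoc]

lemma map_expDiv24 (φ : B →+* B') (s : B) : map φ (expDiv24 s) = expDiv24 (φ s) := by
  rw [expDiv24, expDiv24, ← rescale_map, map_exp, map_mul, φ.map_rat_algebraMap]

lemma map_gammaSeries (φ : B →+* B') : map φ (gammaSeries B) = gammaSeries B' := by
  ext h : 1
  simp [gammaSeries, φ.map_rat_algebraMap]

lemma dvd_coeff_rescale {S : Type*} [CommSemiring S] (a : S) (F : PowerSeries S) {g : ℕ}
    (hg : g ≠ 0) :
    a ∣ coeff g (rescale a F) := by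
  rw [coeff_rescale]
  exact (dvd_pow_self a hg).mul_right _

lemma sum_coeff_mul_coeff {S : Type*} [Semiring S] (F G : PowerSeries S) (g : ℕ) :
    ∑ i ∈ Finset.range (g + 1), coeff i F * coeff (g - i) G = coeff g (F * G) := by
  rw [PowerSeries.coeff_mul,
    Finset.Nat.sum_antidiagonal_eq_sum_range_succ (fun i j => coeff i F * coeff j G)]

end Series

lemma algebraMap_X_ne_zero (i : Fin n) : algebraMap (R n) (K n) (X i) ≠ 0 :=
  (map_ne_zero_iff _ (IsFractionRing.injective (R n) (K n))).mpr (X_ne_zero i)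

lemma Gnpt_one (g : ℕ) :
    Gnpt 1 g = if g = 0 then (algebraMap (R 1) (K 1) (X 0)) ^ (-2 : ℤ) else 0 := by
  cases g <;> rfl

lemma emb_Gf_singleton (i : Fin n) (r : ℕ) :
    emb {i} (Gf 1 ({i} : Finset (Fin n)).card r) =
      if r = 0 then (algebraMap (R n) (K n) (X i)) ^ (-2 : ℤ) else 0 := by
  cases r with
  | succ r => exact map_zero _
  | zero =>
    let i₀ : Fin ({i} : Finset (Fin n)).card := ⟨0, by simp⟩
    have h0 : Gf 1 ({i} : Finset (Fin n)).card 0 =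
        algebraMap (R ({i} : Finset (Fin n)).card) (K _) (X i₀) ^ (-2 : ℤ) := rfl
    have hi : ({i} : Finset (Fin n)).orderEmbOfFin rfl i₀ = i :=
      Finset.mem_singleton.mp (Finset.orderEmbOfFin_mem _ _ _)
    rw [h0, map_zpow₀, emb, IsFractionRing.lift_algebraMap]
    simp [embRH, hi]

lemma splitting_term_singleton (i j : Fin n) (r : ℕ) :
    (algebraMap (R n) (K n) (∑ i' ∈ {i}, X i')) ^ 2 *
      (algebraMap (R n) (K n) (∑ j' ∈ {j}, X j')) ^ 2 *
      ∑ r' ∈ Finset.range (r + 1),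
        emb {i} (Gf 1 ({i} : Finset (Fin n)).card r') *
          emb {j} (Gf 1 ({j} : Finset (Fin n)).card (r - r')) =
    if r = 0 then 1 else 0 := by
  simp only [emb_Gf_singleton, Finset.sum_singleton]
  rw [Finset.sum_eq_single 0 (fun r' _ hr' => by simp [hr']) (by simp), if_pos rfl,
    Nat.sub_zero]
  split_ifs with hr
  · have hxi := algebraMap_X_ne_zero i
    have hxj := algebraMap_X_ne_zero j
    simp only [zpow_neg, zpow_ofNat]
    field_simp
  · simp

lemma sum_splittings_fin_two (r : ℕ) :
    (∑ I : Finset (Fin 2), if I ≠ ∅ ∧ I ≠ univ then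
        (algebraMap (R 2) (K 2) (∑ i ∈ I, X i)) ^ 2 *
          (algebraMap (R 2) (K 2) (∑ i ∈ Iᶜ, X i)) ^ 2 *
          ∑ r' ∈ Finset.range (r + 1),
            emb I (Gf 1 I.card r') * emb Iᶜ (Gf 1 Iᶜ.card (r - r'))
      else 0) = if r = 0 then 2 else 0 := by
  rw [← Finset.sum_filter,
    show univ.filter (fun I : Finset (Fin 2) => I ≠ ∅ ∧ I ≠ univ) = {{0}, {1}} by decide,
    sum_pair (by decide), show ({0} : Finset (Fin 2))ᶜ = {1} by decide,
    show ({1} : Finset (Fin 2))ᶜ = {0} by decide,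
    splitting_term_singleton, splitting_term_singleton]
  split_ifs <;> norm_num

lemma Gnpt_two (g : ℕ) :
    Gnpt 2 g = algebraMap ℚ (K 2) (1 / (4 ^ g * (2 * g + 1).doubleFactorial)) * Dlt 2 ^ g *
      (SX 2)⁻¹ := by
  change Gf (1 + 1) (0 + 2) g = _
  rw [Gf]
  simp_rw [fun s => sum_splittings_fin_two (g - s)]
  rw [Finset.sum_eq_single g (fun s hs hsg => by rw [if_neg (by simp at hs; omega)]; simp)
    (by simp), if_pos (Nat.sub_self g), Nat.sub_self, show 2 * g + (0 + 2) - 1 = 2 * g + 1 by omega,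
    eq_ratCast, mul_inv]
  push_cast [Nat.doubleFactorial]
  ring

lemma Fnpt_eq_coeff (n g : ℕ) :
    Fnpt n g = PowerSeries.coeff g (expDiv24 (SX3 n) * PowerSeries.mk (Gnpt n)) := by
  rw [← sum_coeff_mul_coeff, Fnpt]
  refine Finset.sum_congr rfl fun d _ => ?_
  rw [coeff_expDiv24, PowerSeries.coeff_mk, eq_ratCast, eq_ratCast]
  push_cast
  ring

lemma Fnpt_one_mul_X_sq (g : ℕ) :
    Fnpt 1 g * algebraMap (R 1) (K 1) (X 0 ^ 2) =
      algebraMap (R 1) (K 1) (PowerSeries.coeff g (expDiv24 (∑ j, X j ^ 3 : R 1))) := by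
  have hG : PowerSeries.mk (Gnpt 1) =
      PowerSeries.C ((algebraMap (R 1) (K 1) (X 0)) ^ (-2 : ℤ)) := by
    ext (_ | h) : 1 <;> simp [Gnpt_one, PowerSeries.coeff_C]
  have hx := algebraMap_X_ne_zero (0 : Fin 1)
  rw [Fnpt_eq_coeff, hG, PowerSeries.coeff_mul_C, ← PowerSeries.coeff_map, map_expDiv24, map_pow,
    mul_assoc, zpow_neg, zpow_ofNat, inv_mul_cancel₀ (pow_ne_zero 2 hx), mul_one]
  rfl

def twoPointSeries : PowerSeries (R 2) :=
  expDiv24 (∑ j, X j ^ 3) * PowerSeries.rescale (X 0 * X 1 * (X 0 + X 1)) (gammaSeries (R 2))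

lemma SX_two : SX 2 = algebraMap (R 2) (K 2) (X 0 + X 1) := by
  rw [SX, Fin.sum_univ_two]

lemma Dlt_two : Dlt 2 = algebraMap (R 2) (K 2) (X 0 * X 1 * (X 0 + X 1)) := by
  rw [Dlt, SX_two, SX3, Fin.sum_univ_two, div_eq_iff three_ne_zero, ← map_pow, ← map_sub,
    ← map_ofNat (algebraMap (R 2) (K 2)) 3, ← map_mul]
  congr 1
  ring

lemma X_zero_add_X_one_ne_zero : (X 0 + X 1 : R 2) ≠ 0 := by
  intro h
  simpa using congrArg (MvPolynomial.coeff (Finsupp.single 0 1)) h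

lemma SX_two_ne_zero : SX 2 ≠ 0 := by
  rw [SX_two]
  exact (map_ne_zero_iff _ (IsFractionRing.injective (R 2) (K 2))).mpr X_zero_add_X_one_ne_zero

lemma Fnpt_two_mul_add (g : ℕ) :
    Fnpt 2 g * algebraMap (R 2) (K 2) (X 0 + X 1) =
      algebraMap (R 2) (K 2) (PowerSeries.coeff g twoPointSeries) := by
  have hG : PowerSeries.mk (Gnpt 2) =
      PowerSeries.rescale (Dlt 2) (gammaSeries (K 2)) * PowerSeries.C (SX 2)⁻¹ := by
    ext h : 1
    rw [PowerSeries.coeff_mk, Gnpt_two, PowerSeries.coeff_mul_C, PowerSeries.coeff_rescale,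
      gammaSeries, PowerSeries.coeff_mk]
    ring
  rw [Fnpt_eq_coeff, hG, ← mul_assoc, PowerSeries.coeff_mul_C, ← SX_two, mul_assoc,
    inv_mul_cancel₀ SX_two_ne_zero, mul_one, ← PowerSeries.coeff_map, twoPointSeries,
    map_mul (PowerSeries.map (algebraMap (R 2) (K 2))), map_expDiv24, ← PowerSeries.rescale_map,
    map_gammaSeries, Dlt_two]
  rfl

lemma polyOf_algebraMap (p : R n) : polyOf (algebraMap (R n) (K n) p) = p := by
  have h : ∃ q : R n, algebraMap (R n) (K n) q = algebraMap (R n) (K n) p := ⟨p, rfl⟩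
  rw [polyOf, dif_pos h]
  exact IsFractionRing.injective (R n) (K n) h.choose_spec

lemma map_polyOf_mul_of_dvd {S : Type*} [CommRing S] (φ : R n →+* S) {f : K n}
    {D Q : R n} (hD : D ≠ 0) (hDQ : D ∣ Q)
    (h : f * algebraMap (R n) (K n) D = algebraMap (R n) (K n) Q) :
    φ (polyOf f) * φ D = φ Q := by
  obtain ⟨p, rfl⟩ := hDQ
  have hD' : algebraMap (R n) (K n) D ≠ 0 :=
    (map_ne_zero_iff _ (IsFractionRing.injective (R n) (K n))).mpr hD
  rw [map_mul, mul_comm (algebraMap _ _ D)] at h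
  rw [mul_right_cancel₀ hD' h, polyOf_algebraMap, ← map_mul, mul_comm]

def evalY (σ : Bool) : R 1 →+* Lau 1 :=
  MvPolynomial.eval₂Hom (HahnSeries.C.comp (algebraMap ℚ (R 1))) fun _ => yLau 1 σ

def evalYX (σ : Bool) : R 2 →+* Lau 1 :=
  MvPolynomial.eval₂Hom (HahnSeries.C.comp (algebraMap ℚ (R 1)))
    (Fin.cons (yLau 1 σ) fun _ => HahnSeries.C (X 0))

lemma LExp_zero_neg_two (σ : Bool) : LExp σ (0 : R 1) (-2) = single 2 1 := by
  have hsq : LExp σ (0 : R 1) 2 = single (-2) 1 := by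
    have hs : single (-1 : ℤ) (1 : R 1) * single (-1) 1 = single (-2) 1 := by
      rw [single_mul_single]; norm_num
    rw [show (2 : ℤ) = ((2 : ℕ) : ℤ) from rfl, LExp_natCast, map_zero, add_zero, yLau]
    cases σ <;> simp only [Bool.false_eq_true, if_false, if_true, pow_two] <;>
      linear_combination hs
  calc LExp σ (0 : R 1) (-2) = LExp σ 0 (-2) * (LExp σ 0 2 * single 2 1) := by
        rw [hsq, single_mul_single]; simp
    _ = single 2 1 := by rw [← mul_assoc, LExp_add]; simp [LExp_zero]

lemma FExp_empty (σ : Bool) (g : ℕ) :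
    FExp σ g (∅ : Finset (Fin 1)) =
      PowerSeries.coeff g (expDiv24 (yLau 1 σ ^ 3)) * LExp σ 0 (-2) := by
  cases g with
  | zero =>
    rw [FExp, if_pos ⟨rfl, rfl⟩, coeff_expDiv24, LExp_zero_neg_two]
    simp
  | succ g =>
    have hFExp : FExp σ (g + 1) (∅ : Finset (Fin 1)) = evalY σ (polyOf (Fnpt 1 (g + 1))) := by
      rw [FExp, if_neg (by simp), if_neg (by simp)]
      congr 1
      funext i
      exact Fin.cases rfl (fun j => j.elim0) i
    have hdvd : X 0 ^ 2 ∣ PowerSeries.coeff (g + 1) (expDiv24 (∑ j, X j ^ 3 : R 1)) := by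
      rw [show (∑ j, X j ^ 3 : R 1) = X 0 * X 0 ^ 2 by simp [pow_succ'],
        ← rescale_expDiv24]
      exact dvd_coeff_rescale _ _ g.succ_ne_zero
    have key := map_polyOf_mul_of_dvd (evalY σ) (pow_ne_zero 2 (X_ne_zero 0)) hdvd
      (Fnpt_one_mul_X_sq (g + 1))
    rw [← PowerSeries.coeff_map, map_expDiv24,
      show evalY σ (∑ j, X j ^ 3) = yLau 1 σ ^ 3 by simp [evalY]] at key
    have hy2 : evalY σ (X 0 ^ 2) = LExp σ 0 2 := by
      rw [show (2 : ℤ) = ((2 : ℕ) : ℤ) from rfl, LExp_natCast, map_zero, add_zero]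
      simp [evalY]
    rw [hFExp, ← key, hy2, mul_assoc, LExp_add]
    simp [evalY, LExp_zero]

lemma map_twoPointSeries {S : Type*} [CommRing S] [Algebra ℚ S] (φ : R 2 →+* S) :
    PowerSeries.map φ twoPointSeries =
      expDiv24 (φ (X 0) ^ 3 + φ (X 1) ^ 3) *
        PowerSeries.rescale (φ (X 0) * φ (X 1) * (φ (X 0) + φ (X 1))) (gammaSeries S) := by
  rw [twoPointSeries, map_mul, map_expDiv24, ← PowerSeries.rescale_map, map_gammaSeries]
  simp [Fin.sum_univ_two]

lemma dvd_coeff_twoPointSeries {g : ℕ} (hg : g ≠ 0) :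
    X 0 + X 1 ∣ PowerSeries.coeff g twoPointSeries := by
  have h : twoPointSeries = PowerSeries.rescale (X 0 + X 1)
      (expDiv24 (X 0 ^ 2 - X 0 * X 1 + X 1 ^ 2) *
        PowerSeries.rescale (X 0 * X 1) (gammaSeries (R 2))) := by
    rw [twoPointSeries, map_mul, rescale_expDiv24, PowerSeries.rescale_rescale, Fin.sum_univ_two]
    ring_nf
  rw [h]
  exact dvd_coeff_rescale _ _ hg

lemma FExp_univ (σ : Bool) (g : ℕ) :
    FExp σ g (univ : Finset (Fin 1)) =
      PowerSeries.coeff g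
          (expDiv24 (yLau 1 σ ^ 3 + HahnSeries.C (X 0) ^ 3) *
            PowerSeries.rescale (yLau 1 σ * HahnSeries.C (X 0) * LExp σ (X 0) 1)
              (gammaSeries (Lau 1))) *
        LExp σ (X 0) (-1) := by
  cases g with
  | zero =>
    rw [FExp, if_neg (by simp), if_pos ⟨rfl, by simp⟩]
    simp [← sum_coeff_mul_coeff, coeff_expDiv24, gammaSeries]
  | succ g =>
    have hFExp : FExp σ (g + 1) (univ : Finset (Fin 1)) =
        evalYX σ (polyOf (Fnpt 2 (g + 1))) := by
      rw [FExp, if_neg (by simp), if_neg (by simp)]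
      congr 1
      funext i
      refine Fin.cases rfl (fun j => ?_) i
      exact congrArg (fun k : Fin 1 => (HahnSeries.C (X k : R 1) : Lau 1)) (Subsingleton.elim _ _)
    have key := map_polyOf_mul_of_dvd (evalYX σ) X_zero_add_X_one_ne_zero
      (dvd_coeff_twoPointSeries g.succ_ne_zero) (Fnpt_two_mul_add (g + 1))
    have hmap : PowerSeries.map (evalYX σ) twoPointSeries =
        expDiv24 (yLau 1 σ ^ 3 + HahnSeries.C (X 0) ^ 3) *
          PowerSeries.rescale (yLau 1 σ * HahnSeries.C (X 0) * LExp σ (X 0) 1)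
            (gammaSeries (Lau 1)) := by
      rw [map_twoPointSeries]
      simp [evalYX, LExp_one]
    rw [← PowerSeries.coeff_map, hmap] at key
    have hU : evalYX σ (X 0 + X 1) = LExp σ (X 0) 1 := by simp [evalYX, LExp_one]
    rw [hFExp, ← key, hU, mul_assoc, LExp_add]
    simp [LExp_zero]

lemma yLau_true_pow_three_add_yLau_false_pow_three : yLau 1 true ^ 3 + yLau 1 false ^ 3 = 0 := by
  simp only [yLau, if_true, Bool.false_eq_true, if_false]
  ring

lemma sum_FExp_empty_mul_FExp_univ (g : ℕ) :
    ∑ gp ∈ Finset.range (g + 1),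
        FExp true gp (∅ : Finset (Fin 1)) * FExp false (g - gp) (univ : Finset (Fin 1)) =
      PowerSeries.coeff g (expDiv24 (HahnSeries.C (X 0) ^ 3) *
          PowerSeries.rescale (yLau 1 false * HahnSeries.C (X 0) * LExp false (X 0) 1)
            (gammaSeries (Lau 1))) *
        (LExp true 0 (-2) * LExp false (X 0) (-1)) := by
  simp_rw [FExp_empty, FExp_univ, mul_mul_mul_comm _ (LExp true 0 (-2)), ← Finset.sum_mul,
    sum_coeff_mul_coeff, ← mul_assoc, expDiv24_mul_expDiv24, ← add_assoc,
    yLau_true_pow_three_add_yLau_false_pow_three, zero_add]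

lemma sum_FExp_univ_mul_FExp_empty (g : ℕ) :
    ∑ gp ∈ Finset.range (g + 1),
        FExp true gp (univ : Finset (Fin 1)) * FExp false (g - gp) (∅ : Finset (Fin 1)) =
      PowerSeries.coeff g (expDiv24 (HahnSeries.C (X 0) ^ 3) *
          PowerSeries.rescale (yLau 1 true * HahnSeries.C (X 0) * LExp true (X 0) 1)
            (gammaSeries (Lau 1))) *
        (LExp true (X 0) (-1) * LExp false 0 (-2)) := by
  simp_rw [FExp_empty, FExp_univ, mul_mul_mul_comm _ (LExp true (X 0) (-1)), ← Finset.sum_mul,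
    sum_coeff_mul_coeff, mul_right_comm _ _ (expDiv24 _), expDiv24_mul_expDiv24, add_right_comm,
    yLau_true_pow_three_add_yLau_false_pow_three, zero_add]

/-- `y^{a-2} (x-y)^{b-1} (-yx(x-y))^h + (x+y)^{a-1} (-y)^{b-2} (yx(x+y))^h`. -/
def LLterm (a b : ℤ) (h : ℕ) : Lau 1 :=
  LExp true 0 (a - 2) * LExp false (X 0) (b - 1) *
      (yLau 1 false * HahnSeries.C (X 0) * LExp false (X 0) 1) ^ h +
    LExp true (X 0) (a - 1) * LExp false 0 (b - 2) *
      (yLau 1 true * HahnSeries.C (X 0) * LExp true (X 0) 1) ^ h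

lemma sum_univ_finset_fin_one {M : Type*} [AddCommMonoid M] (f : Finset (Fin 1) → M) :
    ∑ I, f I = f ∅ + f univ := by
  rw [show (univ : Finset (Finset (Fin 1))) = {∅, univ} by decide, sum_pair (by decide)]

lemma LL_one_eq (g : ℕ) (a b : ℤ) :
    LL g 1 a b = ∑ i ∈ Finset.range (g + 1),
      PowerSeries.coeff i (expDiv24 (HahnSeries.C (X 0) ^ 3)) *
        PowerSeries.coeff (g - i) (gammaSeries (Lau 1)) * LLterm a b (g - i) := by
  simp_rw [LL, sum_univ_finset_fin_one, compl_empty, compl_univ, sum_empty, Fin.sum_univ_one,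
    mul_assoc _ (FExp true _ _), Finset.sum_add_distrib, ← Finset.mul_sum,
    sum_FExp_empty_mul_FExp_univ, sum_FExp_univ_mul_FExp_empty, ← sum_coeff_mul_coeff,
    Finset.sum_mul, Finset.mul_sum, ← Finset.sum_add_distrib]
  refine Finset.sum_congr rfl fun i _ => ?_
  rw [PowerSeries.coeff_rescale, PowerSeries.coeff_rescale, LLterm, sub_eq_add_neg a,
    sub_eq_add_neg a, sub_eq_add_neg b, sub_eq_add_neg b, ← LExp_add, ← LExp_add, ← LExp_add,
    ← LExp_add]
  ring

lemma hasLeadingTerm_LLterm (a b : ℤ) (h : ℕ) :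
    HasLeadingTerm (LLterm a b h) (3 - a - b - 2 * h) 0 := by
  have hw (σ : Bool) :
      HasLeadingTerm (yLau 1 σ * HahnSeries.C (X 0) * LExp σ (X 0) 1) (-2) (X 0 : R 1) := by
    have hy : yLau 1 σ = LExp σ (0 : R 1) 1 := by rw [LExp_one, map_zero, add_zero]
    have := ((hasLeadingTerm_LExp σ (0 : R 1) 1).mul (hasLeadingTerm_C (X 0 : R 1))).mul
      (hasLeadingTerm_LExp σ (X 0) 1)
    rw [hy]
    cases σ <;> simpa using this
  have h₁ := ((hasLeadingTerm_LExp true 0 (a - 2)).mul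
    (hasLeadingTerm_LExp false (X 0) (b - 1))).mul ((hw false).pow h)
  have h₂ := ((hasLeadingTerm_LExp true (X 0) (a - 1)).mul
    (hasLeadingTerm_LExp false 0 (b - 2))).mul ((hw true).pow h)
  rw [show -(a - 1) + -(b - 2) + h * -2 = 3 - a - b - 2 * (h : ℤ) by ring] at h₂
  rw [show -(a - 2) + -(b - 1) + h * -2 = 3 - a - b - 2 * (h : ℤ) by ring] at h₁
  unfold LLterm
  convert h₁.add h₂ using 1
  by_cases hb : Even b <;> simp [hb, ← Int.not_even_iff_odd]

lemma hasLeadingTerm_LL_one (g : ℕ) (a b : ℤ) :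
    HasLeadingTerm (LL g 1 a b) (3 - a - b - 2 * g) 0 := by
  rw [LL_one_eq]
  convert HasLeadingTerm.sum (Finset.range (g + 1)) (c := fun _ => (0 : R 1)) fun i hi => ?_
  · simp
  have hig : i ≤ g := Nat.lt_succ_iff.mp (Finset.mem_range.mp hi)
  rw [← map_pow, ← map_expDiv24 (HahnSeries.C : R 1 →+* Lau 1),
    ← map_gammaSeries (HahnSeries.C : R 1 →+* Lau 1),
    PowerSeries.coeff_map, PowerSeries.coeff_map, mul_assoc]
  refine HasLeadingTerm.of_le ?_ (s := 3 - a - b - 2 * ↑(g - i)) (by push_cast [hig]; omega)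
  simpa only [mul_zero] using ((hasLeadingTerm_LLterm a b (g - i)).C_mul _).C_mul _

/-- Lemma 4.2 (i): in the one-variable case, for `k ≥ 2g−3+a+b`,
`[L_g^{a,b}(y,x)]_{y^k} = 0`. -/
theorem lemma_4_2_i (g : ℕ) (a b : ℤ) (k : ℤ) (hk : 2*(g : ℤ) - 3 + a + b ≤ k) (e : ℕ) :
    coeffL (LL g 1 a b) k (fun _ => e) = 0 := by
  rw [coeffL, (hasLeadingTerm_LL_one g a b).coeff_eq_zero (by omega), MvPolynomial.coeff_zero]

end
end

section
/- For every integer g ≥ 1, Σ_{k=1}^{g} ( ((−1)^k/k!) (2g+1+k) Σ_{m_1+⋯+m_k=g, m_i ≥ 1} (2g+k)!/((2m_1+1)! (2m_2+1)! ⋯ (2m_k+1)!) ) = (−1)^g 2^{2g} (g!)^2, where the inner sum runs over ordered k-tuples (m_1,…,m_k) of positive integers with m_1+⋯+m_k = g. -/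
/-!
Write `t = sinh √x / √x` and `c = cosh √x` as power series in `x`. The inner sum is
`(2g+k)! [x^g] (t - 1)^k`, so the left side equals
`(2g+1)! ∑_k C(2g+1+k, k) [x^g] (1 - t)^k = (2g+1)! [x^g] t^(-(2g+2))` by the negative binomial
series (the terms `k > g` vanish since `1 - t` has no constant term).

The numbers `u_n = [x^n] t^(-(2n+2))` satisfy `(2n+3) u_(n+1) + (2n+2) u_n = 0`, whence
`(2n+1)! u_n = (-4)^n (n!)^2`. The recurrence comes from `2c' = t`, `t + 2x t' = c` and
`c² = 1 + x t²`: they give closed forms for `2x (t^(-k))'` and `2x (c t^(-k-1))'`, and comparing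
`n`-th coefficients, where `x f'` acts as multiplication by `n`, yields the recurrence.
-/

open PowerSeries Finset
open scoped Nat

namespace PowerSeries

theorem coeff_X_mul_derivative {R : Type*} [CommSemiring R] (f : R⟦X⟧) (n : ℕ) :
    coeff n (X * d⁄dX R f) = n * coeff n f := by
  cases n with
  | zero => simp
  | succ n => rw [coeff_succ_X_mul, coeff_derivative, mul_comm]; push_cast; rfl

theorem coeff_natCast_mul {R : Type*} [Semiring R] (k n : ℕ) (f : R⟦X⟧) :
    coeff n ((k : R⟦X⟧) * f) = k * coeff n f := by
  rw [← map_natCast (C (R := R)), coeff_C_mul]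

theorem derivative_inv_pow {K : Type*} [Field K] (f : K⟦X⟧) (k : ℕ) :
    d⁄dX K (f⁻¹ ^ k) = -(k * f⁻¹ ^ (k + 1) * d⁄dX K f) := by
  rw [Derivation.leibniz_pow, derivative_inv', smul_eq_mul, nsmul_eq_mul]
  cases k with
  | zero => simp
  | succ k => rw [Nat.add_sub_cancel]; ring

theorem coeff_pow_eq_sum_antidiagonalTuple {R : Type*} [CommSemiring R] (f : R⟦X⟧) (k n : ℕ) :
    coeff n (f ^ k) = ∑ m ∈ Nat.antidiagonalTuple k n, ∏ i, coeff (m i) f := by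
  have h := coeff_prod (fun _ : Fin k => f) n univ
  rw [prod_const, card_univ, Fintype.card_fin] at h
  rw [h]
  exact sum_equiv Finsupp.equivFunOnFinite (by simp [Nat.mem_antidiagonalTuple]) (by simp)

theorem coeff_pow_of_lt {R : Type*} [Semiring R] {w : R⟦X⟧} (hw : constantCoeff w = 0)
    {n k : ℕ} (h : n < k) : coeff n (w ^ k) = 0 :=
  coeff_of_lt_order _ <| (Nat.cast_lt.mpr h).trans_le (le_order_pow_of_constantCoeff_eq_zero k hw)

variable {R : Type*} [CommRing R] {w : R⟦X⟧}

theorem coeff_subst_eq_sum_range (hw : constantCoeff w = 0) (f : R⟦X⟧) (n : ℕ) :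
    coeff n (f.subst w) = ∑ d ∈ range (n + 1), coeff d f * coeff n (w ^ d) := by
  rw [coeff_subst' (.of_constantCoeff_zero' hw)]
  refine finsum_eq_sum_of_support_subset _ fun d hd => ?_
  rw [Function.mem_support] at hd
  rw [coe_range, Set.mem_Iio, Nat.lt_succ_iff]
  by_contra h
  exact hd (by rw [coeff_pow_of_lt hw (not_le.mp h), smul_zero])

theorem coeff_eq_sum_choose_of_mul_one_sub_pow_eq_one (hw : constantCoeff w = 0) {u : R⟦X⟧}
    {N : ℕ} (hu : u * (1 - w) ^ (N + 1) = 1) (n : ℕ) :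
    coeff n u = ∑ k ∈ range (n + 1), ((N + k).choose N : R) * coeff n (w ^ k) := by
  have hsubst : HasSubst w := .of_constantCoeff_zero' hw
  set v : R⟦X⟧ := (mk fun k ↦ ((N + k).choose N : R)).subst w
  have hv : v * (1 - w) ^ (N + 1) = 1 := by
    have h := congrArg (substAlgHom (R := R) hsubst)
      (mk_add_choose_mul_one_sub_pow_eq_one (S := R) (d := N))
    rwa [map_mul, map_pow, map_sub, map_one, coe_substAlgHom, subst_X hsubst] at h
  have huv : u = v := by
    calc u = u * ((1 - w) ^ (N + 1) * v) := by rw [mul_comm _ v, hv, mul_one]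
      _ = v := by rw [← mul_assoc, hu, one_mul]
  rw [huv, coeff_subst_eq_sum_range hw]
  simp only [coeff_mk]

end PowerSeries

/-- The series of `sinh √x / √x`. -/
noncomputable def sinhcSqrt : ℚ⟦X⟧ := mk fun m ↦ ((2 * m + 1)! : ℚ)⁻¹

/-- The series of `cosh √x`. -/
noncomputable def coshSqrt : ℚ⟦X⟧ := mk fun m ↦ ((2 * m)! : ℚ)⁻¹

@[simp]
theorem coeff_sinhcSqrt (n : ℕ) : coeff n sinhcSqrt = ((2 * n + 1)! : ℚ)⁻¹ := coeff_mk _ _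

@[simp]
theorem coeff_coshSqrt (n : ℕ) : coeff n coshSqrt = ((2 * n)! : ℚ)⁻¹ := coeff_mk _ _

theorem constantCoeff_sinhcSqrt : constantCoeff sinhcSqrt = 1 := by
  simp [← coeff_zero_eq_constantCoeff_apply]

theorem constantCoeff_coshSqrt : constantCoeff coshSqrt = 1 := by
  simp [← coeff_zero_eq_constantCoeff_apply]

theorem sinhcSqrt_mul_inv : sinhcSqrt * sinhcSqrt⁻¹ = 1 :=
  PowerSeries.mul_inv_cancel _ (by simp [constantCoeff_sinhcSqrt])

theorem two_mul_derivative_coshSqrt : 2 * d⁄dX ℚ coshSqrt = sinhcSqrt := by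
  ext n
  rw [two_mul, map_add, coeff_derivative, coeff_coshSqrt, coeff_sinhcSqrt,
    show 2 * (n + 1) = 2 * n + 1 + 1 by ring, Nat.factorial_succ]
  push_cast
  field_simp
  ring

theorem two_mul_X_mul_derivative_sinhcSqrt :
    2 * (X * d⁄dX ℚ sinhcSqrt) = coshSqrt - sinhcSqrt := by
  ext n
  rw [two_mul, map_add, coeff_X_mul_derivative, map_sub, coeff_coshSqrt, coeff_sinhcSqrt,
    Nat.factorial_succ]
  push_cast
  field_simp
  ring

theorem coshSqrt_sq : coshSqrt ^ 2 = 1 + X * sinhcSqrt ^ 2 := by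
  refine derivative.ext ?_ (by simp [constantCoeff_coshSqrt])
  have hc := two_mul_derivative_coshSqrt
  have ht := two_mul_X_mul_derivative_sinhcSqrt
  simp only [Derivation.leibniz_pow, Derivation.leibniz, map_add, Derivation.map_one_eq_zero,
    derivative_X, smul_eq_mul, nsmul_eq_mul]
  linear_combination coshSqrt * hc - sinhcSqrt * ht

theorem two_mul_X_mul_derivative_sinhcSqrt_inv_pow (k : ℕ) :
    2 * (X * d⁄dX ℚ (sinhcSqrt⁻¹ ^ k)) =
      (k : ℚ⟦X⟧) * sinhcSqrt⁻¹ ^ k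
        - (k : ℚ⟦X⟧) * (coshSqrt * sinhcSqrt⁻¹ ^ (k + 1)) := by
  rw [derivative_inv_pow]
  linear_combination
    (-(k : ℚ⟦X⟧) * sinhcSqrt⁻¹ ^ (k + 1)) * two_mul_X_mul_derivative_sinhcSqrt
      + ((k : ℚ⟦X⟧) * sinhcSqrt⁻¹ ^ k) * sinhcSqrt_mul_inv

theorem two_mul_X_mul_derivative_coshSqrt_mul_sinhcSqrt_inv_pow (k : ℕ) :
    2 * (X * d⁄dX ℚ (coshSqrt * sinhcSqrt⁻¹ ^ (k + 1))) =
      ((k + 1 : ℕ) : ℚ⟦X⟧) * (coshSqrt * sinhcSqrt⁻¹ ^ (k + 1))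
        - ((k + 1 : ℕ) : ℚ⟦X⟧) * sinhcSqrt⁻¹ ^ (k + 2)
        - (k : ℚ⟦X⟧) * (X * sinhcSqrt⁻¹ ^ k) := by
  have hA := two_mul_X_mul_derivative_sinhcSqrt_inv_pow (k + 1)
  rw [Derivation.leibniz, smul_eq_mul, smul_eq_mul]
  push_cast at hA ⊢
  linear_combination coshSqrt * hA + (X * sinhcSqrt⁻¹ ^ (k + 1)) * two_mul_derivative_coshSqrt
    - (((k : ℚ⟦X⟧) + 1) * sinhcSqrt⁻¹ ^ (k + 2)) * coshSqrt_sq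
    - (X * sinhcSqrt⁻¹ ^ k * (((k : ℚ⟦X⟧) + 1) * sinhcSqrt * sinhcSqrt⁻¹ + k))
      * sinhcSqrt_mul_inv

/-- `n c t^(-2n-1) = n t^(-2n) - x (t^(-2n))'`, whose `n`-th coefficient vanishes. -/
theorem coeff_coshSqrt_mul_sinhcSqrt_inv_pow_eq_zero {n : ℕ} (hn : n ≠ 0) :
    coeff n (coshSqrt * sinhcSqrt⁻¹ ^ (2 * n + 1)) = 0 := by
  have h := congrArg (coeff n) (two_mul_X_mul_derivative_sinhcSqrt_inv_pow (2 * n))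
  rw [two_mul (X * _), map_add, coeff_X_mul_derivative, map_sub, coeff_natCast_mul,
    coeff_natCast_mul] at h
  have h2n : (2 * n : ℚ) ≠ 0 := by positivity
  push_cast at h
  have h2nF : (2 * n : ℚ) * coeff n (coshSqrt * sinhcSqrt⁻¹ ^ (2 * n + 1)) = 0 := by
    linear_combination h
  exact (mul_eq_zero.mp h2nF).resolve_left h2n

theorem coeff_sinhcSqrt_inv_pow_recurrence (n : ℕ) :
    (2 * n + 3 : ℚ) * coeff (n + 1) (sinhcSqrt⁻¹ ^ (2 * n + 4))
      + (2 * n + 2 : ℚ) * coeff n (sinhcSqrt⁻¹ ^ (2 * n + 2)) = 0 := by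
  have h := congrArg (coeff (n + 1))
    (two_mul_X_mul_derivative_coshSqrt_mul_sinhcSqrt_inv_pow (2 * n + 2))
  have hF := coeff_coshSqrt_mul_sinhcSqrt_inv_pow_eq_zero (Nat.succ_ne_zero n)
  rw [show 2 * (n + 1) + 1 = 2 * n + 2 + 1 by ring] at hF
  rw [two_mul (X * _), map_add, coeff_X_mul_derivative, map_sub, map_sub, coeff_natCast_mul,
    coeff_natCast_mul, coeff_natCast_mul, coeff_succ_X_mul, hF,
    show 2 * n + 2 + 2 = 2 * n + 4 by ring] at h
  push_cast at h
  linear_combination h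

theorem factorial_mul_coeff_sinhcSqrt_inv_pow (n : ℕ) :
    ((2 * n + 1)! : ℚ) * coeff n (sinhcSqrt⁻¹ ^ (2 * n + 2)) = (-4) ^ n * (n ! : ℚ) ^ 2 := by
  induction n with
  | zero => simp [constantCoeff_sinhcSqrt]
  | succ n ih =>
    have hrec := coeff_sinhcSqrt_inv_pow_recurrence n
    rw [show 2 * (n + 1) + 1 = 2 * n + 1 + 1 + 1 by ring,
      show 2 * (n + 1) + 2 = 2 * n + 4 by ring, Nat.factorial_succ (2 * n + 1 + 1),
      Nat.factorial_succ (2 * n + 1), Nat.factorial_succ n]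
    push_cast
    linear_combination (2 * n + 2 : ℚ) * ((2 * n + 1)! : ℚ) * hrec - (2 * n + 2 : ℚ) ^ 2 * ih

theorem coeff_sinhcSqrt_sub_one (n : ℕ) :
    coeff n (sinhcSqrt - 1) = if n = 0 then 0 else ((2 * n + 1)! : ℚ)⁻¹ := by
  rw [map_sub, coeff_sinhcSqrt, coeff_one]
  split_ifs with h
  · simp [h]
  · rw [sub_zero]

theorem coeff_sinhcSqrt_sub_one_pow (g k : ℕ) :
    coeff g ((sinhcSqrt - 1) ^ k) =
      ∑ m ∈ (Nat.antidiagonalTuple k g).filter (fun m => ∀ i, 1 ≤ m i),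
        ∏ i, ((2 * m i + 1)! : ℚ)⁻¹ := by
  rw [coeff_pow_eq_sum_antidiagonalTuple, ← sum_filter_of_ne (p := fun m => ∀ i, 1 ≤ m i)]
  · refine sum_congr rfl fun m hm => prod_congr rfl fun i _ => ?_
    rw [coeff_sinhcSqrt_sub_one, if_neg (Nat.one_le_iff_ne_zero.mp ((mem_filter.mp hm).2 i))]
  · intro m _ hprod i
    by_contra hi
    exact hprod (prod_eq_zero (mem_univ i) (by rw [coeff_sinhcSqrt_sub_one, if_pos (by omega)]))

theorem zagier_summand_eq (g k : ℕ) :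
    ((-1 : ℚ) ^ k / (k ! : ℚ)) * ((2 * g + 1 + k : ℕ) : ℚ) *
        ∑ m ∈ (Nat.antidiagonalTuple k g).filter (fun m => ∀ i, 1 ≤ m i),
          (((2 * g + k)! : ℚ) / ∏ i, ((2 * m i + 1)! : ℚ))
      = (2 * g + 1)! * (((2 * g + 1 + k).choose (2 * g + 1) : ℚ) *
          coeff g ((1 - sinhcSqrt) ^ k)) := by
  have hinner : ∑ m ∈ (Nat.antidiagonalTuple k g).filter (fun m => ∀ i, 1 ≤ m i),
      (((2 * g + k)! : ℚ) / ∏ i, ((2 * m i + 1)! : ℚ))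
        = (2 * g + k)! * coeff g ((sinhcSqrt - 1) ^ k) := by
    simp only [coeff_sinhcSqrt_sub_one_pow, mul_sum, div_eq_mul_inv, prod_inv_distrib]
  have hsign : coeff g ((1 - sinhcSqrt) ^ k) = (-1) ^ k * coeff g ((sinhcSqrt - 1) ^ k) := by
    rw [← neg_sub, neg_pow, show (-1 : ℚ⟦X⟧) ^ k = C ((-1 : ℚ) ^ k) by simp, coeff_C_mul]
  have hchoose : ((2 * g + 1 + k).choose (2 * g + 1) * (2 * g + 1)! * k ! : ℚ)
      = (2 * g + 1 + k) * (2 * g + k)! := by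
    rw [Nat.choose_symm_add]
    exact_mod_cast (Nat.add_choose_mul_factorial_mul_factorial (2 * g + 1) k).trans
      (by rw [show 2 * g + 1 + k = 2 * g + k + 1 by ring, Nat.factorial_succ])
  rw [hinner, hsign]
  have hk : (k ! : ℚ) ≠ 0 := by positivity
  field_simp
  push_cast
  linear_combination -coeff g ((sinhcSqrt - 1) ^ k) * hchoose

theorem sum_choose_mul_coeff_one_sub_sinhcSqrt_pow {g : ℕ} (hg : g ≠ 0) :
    ∑ k ∈ Icc 1 g, ((2 * g + 1 + k).choose (2 * g + 1) : ℚ) * coeff g ((1 - sinhcSqrt) ^ k)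
      = coeff g (sinhcSqrt⁻¹ ^ (2 * g + 2)) := by
  have hw : constantCoeff (1 - sinhcSqrt) = 0 := by simp [constantCoeff_sinhcSqrt]
  have hu : sinhcSqrt⁻¹ ^ (2 * g + 2) * (1 - (1 - sinhcSqrt)) ^ (2 * g + 1 + 1) = 1 := by
    rw [sub_sub_cancel, ← mul_pow, mul_comm, sinhcSqrt_mul_inv, one_pow]
  rw [coeff_eq_sum_choose_of_mul_one_sub_pow_eq_one hw hu]
  refine sum_subset (fun k hk => ?_) (fun k hk hk' => ?_)
  · simp only [mem_Icc, mem_range] at hk ⊢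
    omega
  · obtain rfl : k = 0 := by simp only [mem_Icc, mem_range] at hk hk'; omega
    simp [coeff_one, hg]

/-- Zagier's combinatorial identity:
`Σ_{k=1}^g ((−1)^k/k!)(2g+1+k) Σ_{m_1+⋯+m_k=g, m_i≥1} (2g+k)!/Π (2m_i+1)! = (−1)^g 2^{2g} (g!)²`,
the inner sum over ordered `k`-tuples of positive integers summing to `g`. -/
theorem zagier_identity (g : ℕ) (hg : 1 ≤ g) :
    ∑ k ∈ Finset.Icc 1 g,
      ((-1 : ℚ)^k / (Nat.factorial k : ℚ)) * ((2*g+1+k : ℕ) : ℚ) *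
        ∑ m ∈ (Finset.Nat.antidiagonalTuple k g).filter (fun m => ∀ i, 1 ≤ m i),
          (((2*g+k).factorial : ℚ) / ∏ i, ((2*(m i)+1).factorial : ℚ))
      = (-1 : ℚ)^g * 2^(2*g) * ((g.factorial : ℚ))^2 := by
  rw [sum_congr rfl fun k _ => zagier_summand_eq g k, ← mul_sum,
    sum_choose_mul_coeff_one_sub_sinhcSqrt_pow (by omega), factorial_mul_coeff_sinhcSqrt_inv_pow,
    pow_mul, ← mul_pow]
  norm_num
end
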